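/- arXiv:2211.10434 — 2 statements merged into one kernel-verified Lean document; each statement's English description precedes it below -/
import Mathlib

section
/- Let 0 < λ ≤ Λ, and define on B_{R₀} \ closure(B_{r₀}) (with 1 < r₀ < R₀) the radial function w(x) = c₀ ((R₀ − |x|)/(R₀ − r₀))⁴ + c₁, where c₀ ∈ (0,1], c₁ ≥ 0. Then w is C² on that annulus, D²w(x) = 4c₀ (R₀−|x|)²/(R₀−r₀)⁴ [ ((R₀+2|x|)/|x|³) x⊗x + ((|x|−R₀)/|x|) I ], and for R₀ sufficiently large (depending on n, λ, Λ, r₀), M⁺(D²w) ≤ C(n,λ,Λ)/R₀ on the annulus, where M⁺ is the maximal Pucci operator. -/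
/-- Maximal Pucci extremal operator, defined via eigenvalues of a symmetric matrix. -/
noncomputable def pucciPlus (lam Lam : ℝ) {n : ℕ} {M : Matrix (Fin n) (Fin n) ℝ}
    (hM : M.IsHermitian) : ℝ :=
  Lam * ∑ i, max (hM.eigenvalues i) 0 + lam * ∑ i, min (hM.eigenvalues i) 0

/-- The matrix of second partial derivatives of `w` at `x`. -/
noncomputable def hessMatrix {n : ℕ} (w : EuclideanSpace ℝ (Fin n) → ℝ)
    (x : EuclideanSpace ℝ (Fin n)) : Matrix (Fin n) (Fin n) ℝ :=
  Matrix.of fun i j =>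
    fderiv ℝ (fun y => fderiv ℝ w y (EuclideanSpace.single j 1)) x (EuclideanSpace.single i 1)

/-- The radial supersolution barrier `w(x) = c₀ ((R₀ − |x|)/(R₀ − r₀))⁴ + c₁`. -/
noncomputable def radialBarrier (c₀ c₁ r₀ R₀ : ℝ) {n : ℕ}
    (x : EuclideanSpace ℝ (Fin n)) : ℝ :=
  c₀ * ((R₀ - ‖x‖) / (R₀ - r₀)) ^ (4 : ℕ) + c₁

section Aux

variable {n : ℕ}

private lemma hasFDerivAt_norm' {x : EuclideanSpace ℝ (Fin n)} (hx : x ≠ 0) :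
    HasFDerivAt (fun y : EuclideanSpace ℝ (Fin n) => ‖y‖) (‖x‖⁻¹ • innerSL ℝ x) x := by
  have hx' : (0:ℝ) < ‖x‖ := norm_pos_iff.2 hx
  have h1 : HasFDerivAt (fun y : EuclideanSpace ℝ (Fin n) => ‖y‖ ^ 2)
      (2 • innerSL ℝ x) x := (hasStrictFDerivAt_norm_sq x).hasFDerivAt
  have h2 : HasDerivAt Real.sqrt (1 / (2 * Real.sqrt (‖x‖ ^ 2))) (‖x‖ ^ 2) :=
    Real.hasDerivAt_sqrt (by positivity)
  have h3 := h2.comp_hasFDerivAt x h1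
  have e1 : (Real.sqrt ∘ fun y : EuclideanSpace ℝ (Fin n) => ‖y‖ ^ 2)
      = fun y : EuclideanSpace ℝ (Fin n) => ‖y‖ := by
    funext y; simp [Function.comp, Real.sqrt_sq (norm_nonneg _)]
  rw [e1] at h3
  refine h3.congr_fderiv ?_
  rw [Real.sqrt_sq (norm_nonneg _)]
  ext v
  simp only [ContinuousLinearMap.smul_apply, smul_eq_mul, two_smul,
    ContinuousLinearMap.add_apply]
  field_simp
  ring

private lemma fderiv_barrier_apply (c₀ c₁ r₀ R₀ : ℝ) (hs : R₀ - r₀ ≠ 0)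
    {x : EuclideanSpace ℝ (Fin n)} (hx : x ≠ 0) (j : Fin n) :
    fderiv ℝ (radialBarrier c₀ c₁ r₀ R₀) x (EuclideanSpace.single j 1)
      = (-4 * c₀ / (R₀ - r₀) ^ 4) * ((R₀ - ‖x‖) ^ 3 * (x j * ‖x‖⁻¹)) := by
  have hx' : (0:ℝ) < ‖x‖ := norm_pos_iff.2 hx
  have h : HasDerivAt (fun t : ℝ => (R₀ - t) / (R₀ - r₀)) (-1 / (R₀ - r₀)) ‖x‖ := by
    simpa using ((hasDerivAt_id (‖x‖)).const_sub R₀).div_const (R₀ - r₀)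
  have hg : HasDerivAt (fun t : ℝ => c₀ * ((R₀ - t) / (R₀ - r₀)) ^ 4 + c₁)
      (c₀ * (4 * ((R₀ - ‖x‖) / (R₀ - r₀)) ^ 3 * (-1 / (R₀ - r₀)))) ‖x‖ := by
    have h2 := ((h.pow 4).const_mul c₀).add_const c₁
    exact h2.congr_deriv (by norm_num)
  have hw : HasFDerivAt (radialBarrier c₀ c₁ r₀ R₀)
      ((c₀ * (4 * ((R₀ - ‖x‖) / (R₀ - r₀)) ^ 3 * (-1 / (R₀ - r₀)))) •
        (‖x‖⁻¹ • innerSL ℝ x)) x :=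
    hg.comp_hasFDerivAt x (hasFDerivAt_norm' hx)
  rw [hw.fderiv]
  simp only [ContinuousLinearMap.smul_apply, smul_eq_mul, innerSL_apply_apply,
    EuclideanSpace.inner_single_right, RCLike.star_def, conj_trivial]
  field_simp

private lemma hess_entry (c₀ c₁ r₀ R₀ : ℝ) (hs : R₀ - r₀ ≠ 0)
    {x : EuclideanSpace ℝ (Fin n)} (hx : x ≠ 0) (i j : Fin n) :
    hessMatrix (radialBarrier c₀ c₁ r₀ R₀) x i j
      = 4 * c₀ * (R₀ - ‖x‖) ^ (2 : ℕ) / (R₀ - r₀) ^ (4 : ℕ) *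
          (((R₀ + 2 * ‖x‖) / ‖x‖ ^ (3 : ℕ)) * (x i * x j)
            + ((‖x‖ - R₀) / ‖x‖) * (if i = j then (1 : ℝ) else 0)) := by
  have hx' : (0:ℝ) < ‖x‖ := norm_pos_iff.2 hx
  set K : ℝ := -4 * c₀ / (R₀ - r₀) ^ 4 with hK
  have heq : (fun y => fderiv ℝ (radialBarrier c₀ c₁ r₀ R₀) y (EuclideanSpace.single j 1))
      =ᶠ[nhds x] fun y : EuclideanSpace ℝ (Fin n) => K * ((R₀ - ‖y‖) ^ 3 * (y j * ‖y‖⁻¹)) := by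
    filter_upwards [compl_singleton_mem_nhds hx] with y hy
    exact fderiv_barrier_apply c₀ c₁ r₀ R₀ hs hy j
  have hN := hasFDerivAt_norm' hx
  have h1 : HasFDerivAt (fun y : EuclideanSpace ℝ (Fin n) => (R₀ - ‖y‖) ^ 3)
      ((3 * (R₀ - ‖x‖) ^ 2 * (-1)) • (‖x‖⁻¹ • innerSL ℝ x)) x := by
    have h : HasDerivAt (fun t : ℝ => (R₀ - t) ^ 3) (3 * (R₀ - ‖x‖) ^ 2 * (-1)) ‖x‖ := by
      have h0 := ((hasDerivAt_id (‖x‖)).const_sub R₀).pow 3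
      exact h0.congr_deriv (by simp)
    exact h.comp_hasFDerivAt x hN
  have h2 : HasFDerivAt (fun y : EuclideanSpace ℝ (Fin n) => y j)
      (PiLp.proj 2 (fun _ : Fin n => ℝ) j : EuclideanSpace ℝ (Fin n) →L[ℝ] ℝ) x :=
    (PiLp.proj 2 (fun _ : Fin n => ℝ) j : EuclideanSpace ℝ (Fin n) →L[ℝ] ℝ).hasFDerivAt
  have h3 : HasFDerivAt (fun y : EuclideanSpace ℝ (Fin n) => ‖y‖⁻¹)
      ((-(‖x‖ ^ 2)⁻¹) • (‖x‖⁻¹ • innerSL ℝ x)) x :=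
    (hasDerivAt_inv hx'.ne').comp_hasFDerivAt x hN
  have hφ := ((h1.mul (h2.mul h3)).const_mul K)
  have hfd : hessMatrix (radialBarrier c₀ c₁ r₀ R₀) x i j
      = (fderiv ℝ (fun y : EuclideanSpace ℝ (Fin n) => K * ((R₀ - ‖y‖) ^ 3 * (y j * ‖y‖⁻¹))) x)
          (EuclideanSpace.single i 1) := by
    simp only [hessMatrix, Matrix.of_apply]
    rw [heq.fderiv_eq]
  rw [hfd, HasFDerivAt.fderiv (f := fun y : EuclideanSpace ℝ (Fin n) => K * ((R₀ - ‖y‖) ^ 3 * (y j * ‖y‖⁻¹))) hφ]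
  simp only [ContinuousLinearMap.smul_apply, ContinuousLinearMap.add_apply, smul_eq_mul,
    innerSL_apply_apply, EuclideanSpace.inner_single_right, RCLike.star_def, conj_trivial,
    PiLp.proj_apply, EuclideanSpace.single_apply, Pi.mul_apply]
  have hr : ‖x‖ ≠ 0 := hx'.ne'
  rw [hK]
  set s : ℝ := R₀ - r₀ with hsdef
  by_cases h : i = j
  · subst h
    field_simp
    ring
  · simp only [if_neg h, if_neg (Ne.symm h)]
    field_simp
    ring

private lemma eigen_bound (c₀ c₁ r₀ R₀ : ℝ) (hr₀ : 1 < r₀) (hc₀ : 0 < c₀) (hc₀' : c₀ ≤ 1)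
    (hR : 2 * r₀ ≤ R₀) {x : EuclideanSpace ℝ (Fin n)} (hx1 : r₀ < ‖x‖) (hx2 : ‖x‖ < R₀)
    (hA : (hessMatrix (radialBarrier c₀ c₁ r₀ R₀) x).IsHermitian) (i : Fin n) :
    hA.eigenvalues i ≤ 192 / R₀ := by
  have hr0 : (0:ℝ) < r₀ := lt_trans one_pos hr₀
  have hR₀ : (0:ℝ) < R₀ := by linarith
  have hrpos : (0:ℝ) < ‖x‖ := by linarith
  have hx : x ≠ 0 := norm_pos_iff.mp hrpos
  have hspos : (0:ℝ) < R₀ - r₀ := by nlinarith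
  have hsne : R₀ - r₀ ≠ 0 := hspos.ne'
  set r : ℝ := ‖x‖ with hrdef
  set α : ℝ := 4 * c₀ * (R₀ - r) ^ 2 / (R₀ - r₀) ^ 4 with hα
  set β : ℝ := (R₀ + 2 * r) / r ^ 3 with hβ
  set γ : ℝ := (r - R₀) / r with hγ
  have hEnt : ∀ k l : Fin n, hessMatrix (radialBarrier c₀ c₁ r₀ R₀) x k l
      = α * (β * (x k * x l) + γ * (if k = l then (1:ℝ) else 0)) := by
    intro k l
    rw [hess_entry c₀ c₁ r₀ R₀ hsne hx k l]
  set v : EuclideanSpace ℝ (Fin n) := hA.eigenvectorBasis i with hv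
  have hmv := hA.mulVec_eigenvectorBasis i
  rw [← hv] at hmv
  have hvnorm1 : ‖v‖ = 1 := hA.eigenvectorBasis.orthonormal.1 i
  have hvnorm : ∑ k, v k * v k = 1 := by
    have h2 : (inner ℝ v v : ℝ) = ‖v‖ ^ 2 := real_inner_self_eq_norm_sq v
    rw [hvnorm1] at h2
    simp only [PiLp.inner_apply, RCLike.inner_apply, conj_trivial, one_pow] at h2
    exact h2
  set s : ℝ := ∑ k, x k * v k with hsdot
  have h0 : ∀ k, ((hessMatrix (radialBarrier c₀ c₁ r₀ R₀) x).mulVec ⇑v) k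
      = α * (β * x k * s + γ * v k) := by
    intro k
    simp only [Matrix.mulVec, dotProduct]
    have e : ∀ l, hessMatrix (radialBarrier c₀ c₁ r₀ R₀) x k l * v l
        = α * β * x k * (x l * v l) + α * γ * ((if k = l then (1:ℝ) else 0) * v l) := by
      intro l; rw [hEnt k l]; ring
    rw [Finset.sum_congr rfl fun l _ => e l, Finset.sum_add_distrib, ← Finset.mul_sum,
      ← Finset.mul_sum]
    simp only [ite_mul, one_mul, zero_mul, Finset.sum_ite_eq, Finset.mem_univ, if_true]
    rw [← hsdot]
    ring
  have h1 : ∑ k, v k * ((hessMatrix (radialBarrier c₀ c₁ r₀ R₀) x).mulVec ⇑v) k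
      = hA.eigenvalues i := by
    simp only [WithLp.ofLp_toLp]
    rw [hmv]
    simp only [Pi.smul_apply, smul_eq_mul]
    have : ∀ k : Fin n, v k * (hA.eigenvalues i * v k) = hA.eigenvalues i * (v k * v k) :=
      fun k => by ring
    rw [Finset.sum_congr rfl fun k _ => this k, ← Finset.mul_sum, hvnorm, mul_one]
  have h2 : ∑ k, v k * ((hessMatrix (radialBarrier c₀ c₁ r₀ R₀) x).mulVec ⇑v) k
      = α * (β * s ^ 2 + γ) := by
    rw [Finset.sum_congr rfl fun k _ => by rw [h0 k]]
    have e : ∀ k : Fin n, v k * (α * (β * x k * s + γ * v k))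
        = α * β * s * (x k * v k) + α * γ * (v k * v k) := fun k => by ring
    rw [Finset.sum_congr rfl fun k _ => e k, Finset.sum_add_distrib, ← Finset.mul_sum,
      ← Finset.mul_sum, ← hsdot, hvnorm]
    ring
  have hlam : hA.eigenvalues i = α * (β * s ^ 2 + γ) := by rw [← h1, h2]
  have hcs : s ^ 2 ≤ r ^ 2 := by
    have h3 : (inner ℝ x v : ℝ) = s := by
      simp [PiLp.inner_apply, RCLike.inner_apply, conj_trivial, hsdot, mul_comm]
    have h4 := real_inner_mul_inner_self_le x v
    rw [h3, real_inner_self_eq_norm_sq, real_inner_self_eq_norm_sq, hvnorm1] at h4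
    nlinarith [h4]
  have hαpos : 0 ≤ α := by
    rw [hα]; positivity
  have hβpos : 0 ≤ β := by
    rw [hβ]; apply div_nonneg <;> nlinarith
  have hγneg : γ ≤ 0 := by
    rw [hγ]; apply div_nonpos_of_nonpos_of_nonneg <;> linarith
  have hmain : hA.eigenvalues i ≤ α * (β * r ^ 2) := by
    rw [hlam]
    apply mul_le_mul_of_nonneg_left _ hαpos
    nlinarith [mul_le_mul_of_nonneg_left hcs hβpos]
  have key : α * (β * r ^ 2) = 4 * c₀ * (R₀ - r) ^ 2 * (R₀ + 2 * r) / ((R₀ - r₀) ^ 4 * r) := by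
    rw [hα, hβ]; field_simp
  have hqpos : (0:ℝ) < (R₀ - r₀) ^ 4 * r := mul_pos (pow_pos hspos 4) hrpos
  clear_value r α β γ s v
  refine le_trans hmain ?_
  clear hmain hlam hcs h0 h1 h2 hEnt hmv hvnorm hvnorm1 hv hsdot hα hβ hγ v s hA hx hrdef x
  rw [key, div_le_div_iff₀ hqpos hR₀]
  have e1 : (R₀ - r) ^ 2 ≤ R₀ ^ 2 := by nlinarith
  have e2 : R₀ + 2 * r ≤ 3 * R₀ := by linarith
  have e3 : R₀ ^ 4 ≤ 16 * (R₀ - r₀) ^ 4 := by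
    have h := pow_le_pow_left₀ (by linarith : (0:ℝ) ≤ R₀ / 2)
      (by linarith : R₀ / 2 ≤ R₀ - r₀) 4
    have h2 : (R₀ / 2) ^ 4 = R₀ ^ 4 / 16 := by ring
    rw [h2] at h
    linarith
  have e4 : 1 ≤ r := by linarith
  have p1 : (0:ℝ) ≤ (R₀ - r) ^ 2 := sq_nonneg _
  have p2 : (0:ℝ) < R₀ + 2 * r := by linarith
  have s1 : 4 * c₀ * (R₀ - r) ^ 2 ≤ 4 * R₀ ^ 2 := by
    have h := mul_le_mul_of_nonneg_right hc₀' p1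
    linarith
  have s2 : 4 * c₀ * (R₀ - r) ^ 2 * (R₀ + 2 * r) ≤ 4 * R₀ ^ 2 * (3 * R₀) :=
    mul_le_mul s1 e2 p2.le (by positivity)
  have s3 : 4 * c₀ * (R₀ - r) ^ 2 * (R₀ + 2 * r) * R₀ ≤ 12 * R₀ ^ 4 := by
    have h := mul_le_mul_of_nonneg_right s2 hR₀.le
    have h2 : 4 * R₀ ^ 2 * (3 * R₀) * R₀ = 12 * R₀ ^ 4 := by ring
    linarith
  have s4 : 12 * R₀ ^ 4 ≤ 192 * (R₀ - r₀) ^ 4 := by linarith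
  have s5 : 192 * (R₀ - r₀) ^ 4 ≤ 192 * ((R₀ - r₀) ^ 4 * r) := by
    have h := mul_le_mul_of_nonneg_left e4 (pow_pos hspos 4).le
    linarith
  linarith

end Aux

theorem radial_barrier_hessian_and_pucci_bound (n : ℕ) (lam Lam r₀ c₀ c₁ : ℝ)
    (hlam : 0 < lam) (hLam : lam ≤ Lam) (hr₀ : 1 < r₀)
    (hc₀ : 0 < c₀) (hc₀' : c₀ ≤ 1) (hc₁ : 0 ≤ c₁) :
    (∀ R₀ : ℝ, r₀ < R₀ →
      ContDiffOn ℝ 2 (radialBarrier c₀ c₁ r₀ R₀ (n := n))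
        (Metric.ball (0 : EuclideanSpace ℝ (Fin n)) R₀ \ Metric.closedBall 0 r₀) ∧
      ∀ x ∈ Metric.ball (0 : EuclideanSpace ℝ (Fin n)) R₀ \ Metric.closedBall 0 r₀,
        hessMatrix (radialBarrier c₀ c₁ r₀ R₀) x
          = Matrix.of fun i j =>
              4 * c₀ * (R₀ - ‖x‖) ^ (2 : ℕ) / (R₀ - r₀) ^ (4 : ℕ) *
                (((R₀ + 2 * ‖x‖) / ‖x‖ ^ (3 : ℕ)) * (x i * x j)
                  + ((‖x‖ - R₀) / ‖x‖) * (if i = j then (1 : ℝ) else 0))) ∧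
    (∃ C : ℝ, 0 < C ∧ ∃ R₁ : ℝ, r₀ < R₁ ∧ ∀ R₀ : ℝ, R₁ ≤ R₀ →
      ∀ x ∈ Metric.ball (0 : EuclideanSpace ℝ (Fin n)) R₀ \ Metric.closedBall 0 r₀,
        ∀ (hA : (hessMatrix (radialBarrier c₀ c₁ r₀ R₀) x).IsHermitian),
          pucciPlus lam Lam hA ≤ C / R₀) := by
  have hLam0 : (0:ℝ) < Lam := lt_of_lt_of_le hlam hLam
  constructor
  · intro R₀ hR₀
    have hsne : R₀ - r₀ ≠ 0 := sub_ne_zero.mpr (ne_of_gt hR₀)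
    constructor
    · intro x hx
      have hx2 : ¬ ‖x‖ ≤ r₀ := by
        simpa [Metric.mem_closedBall, dist_zero_right] using hx.2
      have hxne : x ≠ 0 := by
        intro h
        rw [h] at hx2
        simp at hx2
        linarith
      have hg : ContDiff ℝ 2 (fun t : ℝ => c₀ * ((R₀ - t) / (R₀ - r₀)) ^ (4:ℕ) + c₁) :=
        (contDiff_const.mul (((contDiff_const.sub contDiff_id).div_const _).pow 4)).add
          contDiff_const
      exact ((hg.contDiffAt).comp x (contDiffAt_norm ℝ hxne)).contDiffWithinAt
    · intro x hx
      have hx2 : ¬ ‖x‖ ≤ r₀ := by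
        simpa [Metric.mem_closedBall, dist_zero_right] using hx.2
      have hxne : x ≠ 0 := by
        intro h
        rw [h] at hx2
        simp at hx2
        linarith
      ext i j
      rw [Matrix.of_apply]
      exact hess_entry c₀ c₁ r₀ R₀ hsne hxne i j
  · refine ⟨192 * ((n : ℝ) + 1) * Lam, ?_, 2 * r₀, by linarith, ?_⟩
    · have : (0:ℝ) < 192 * ((n : ℝ) + 1) := by positivity
      exact mul_pos this hLam0
    · intro R₀ hR₀ x hx hA
      have hx1 : r₀ < ‖x‖ := by
        have := hx.2
        simp only [Metric.mem_closedBall, dist_zero_right, not_le] at this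
        exact this
      have hx2 : ‖x‖ < R₀ := by
        have := hx.1
        simpa [Metric.mem_ball, dist_zero_right] using this
      have hR₀pos : (0:ℝ) < R₀ := by nlinarith
      have hbound : ∀ i : Fin n, hA.eigenvalues i ≤ 192 / R₀ := fun i =>
        eigen_bound c₀ c₁ r₀ R₀ hr₀ hc₀ hc₀' hR₀ hx1 hx2 hA i
      have hpos : (0:ℝ) ≤ 192 / R₀ := by positivity
      have hsum1 : ∑ i, max (hA.eigenvalues i) 0 ≤ (n : ℝ) * (192 / R₀) := by
        calc ∑ i, max (hA.eigenvalues i) 0 ≤ ∑ _i : Fin n, 192 / R₀ :=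
              Finset.sum_le_sum fun i _ => max_le (hbound i) hpos
          _ = (n : ℝ) * (192 / R₀) := by
              rw [Finset.sum_const, Finset.card_univ, Fintype.card_fin, nsmul_eq_mul]
      have hsum2 : ∑ i, min (hA.eigenvalues i) 0 ≤ 0 :=
        Finset.sum_nonpos fun i _ => min_le_right _ _
      have hterm2 : lam * ∑ i, min (hA.eigenvalues i) 0 ≤ 0 :=
        mul_nonpos_of_nonneg_of_nonpos hlam.le hsum2
      have hterm1 : Lam * ∑ i, max (hA.eigenvalues i) 0 ≤ Lam * ((n : ℝ) * (192 / R₀)) :=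
        mul_le_mul_of_nonneg_left hsum1 hLam0.le
      have hfin : Lam * ((n : ℝ) * (192 / R₀)) ≤ 192 * ((n : ℝ) + 1) * Lam / R₀ := by
        rw [show Lam * ((n : ℝ) * (192 / R₀)) = 192 * (n : ℝ) * Lam / R₀ by ring]
        rw [div_le_div_iff₀ hR₀pos hR₀pos]
        have hn : (0:ℝ) ≤ (n : ℝ) := Nat.cast_nonneg n
        nlinarith [mul_pos hLam0 hR₀pos]
      unfold pucciPlus
      linarith
end

section
/- Let 1 < p < ∞, 0 < b < p − 1, and set α = 1 − b/(p−1) ∈ (0,1). Let v be a positive smooth function with Δ_p v ≥ c₁ v^b on an open set, and let v̄ = v^α. Then Δ_p v̄ ≥ α^{p−1} c₁ + ((α−1)(p−1)/(α v̄)) |∇v̄|^p. -/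
/-- The p-Laplacian `Δ_p u = div(|∇u|^{p−2} ∇u)`, written as a sum of partial
derivatives of the components of the vector field `|∇u|^{p−2} ∇u`. -/
noncomputable def pLaplacian (p : ℝ) {n : ℕ} (u : EuclideanSpace ℝ (Fin n) → ℝ)
    (x : EuclideanSpace ℝ (Fin n)) : ℝ :=
  ∑ i, fderiv ℝ (fun y => ‖gradient u y‖ ^ (p - 2) * gradient u y i) x
    (EuclideanSpace.single i 1)

open InnerProductSpace

variable {n : ℕ}

lemma gradient_apply_single (f : EuclideanSpace ℝ (Fin n) → ℝ) (x : EuclideanSpace ℝ (Fin n))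
    (i : Fin n) : gradient f x i = fderiv ℝ f x (EuclideanSpace.single i 1) := by
  have h := InnerProductSpace.toDual_symm_apply (𝕜 := ℝ) (E := EuclideanSpace ℝ (Fin n))
    (y := fderiv ℝ f x) (x := EuclideanSpace.single i (1:ℝ))
  rw [EuclideanSpace.inner_single_right] at h
  simpa [gradient] using h

lemma gradient_rpow {Ω : Set (EuclideanSpace ℝ (Fin n))}
    {v : EuclideanSpace ℝ (Fin n) → ℝ} (hv : ∀ y ∈ Ω, DifferentiableAt ℝ v y)
    (hvpos : ∀ y ∈ Ω, 0 < v y) (α : ℝ) {y : EuclideanSpace ℝ (Fin n)} (hy : y ∈ Ω) :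
    gradient (fun z => v z ^ α) y = (α * v y ^ (α - 1)) • gradient v y := by
  have hd : HasFDerivAt (fun z => v z ^ α) ((α * v y ^ (α - 1)) • fderiv ℝ v y) y := by
    have hr : HasDerivAt (fun t : ℝ => t ^ α) (α * v y ^ (α - 1)) (v y) :=
      Real.hasDerivAt_rpow_const (Or.inl (hvpos y hy).ne')
    exact hr.comp_hasFDerivAt y (hv y hy).hasFDerivAt
  rw [gradient, hd.fderiv, map_smul, gradient]

lemma pLaplacian_rpow (p α : ℝ) (hα0 : 0 < α)
    {Ω : Set (EuclideanSpace ℝ (Fin n))} (hΩ : IsOpen Ω)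
    {v : EuclideanSpace ℝ (Fin n) → ℝ} (hv : ContDiffOn ℝ 2 v Ω)
    (hvpos : ∀ y ∈ Ω, 0 < v y) (hvgrad : ∀ y ∈ Ω, gradient v y ≠ 0)
    {x : EuclideanSpace ℝ (Fin n)} (hx : x ∈ Ω) :
    pLaplacian p (fun z => v z ^ α) x
      = α ^ (p - 1) * v x ^ ((α - 1) * (p - 1)) * pLaplacian p v x
        + α ^ (p - 1) * ((α - 1) * (p - 1)) * v x ^ ((α - 1) * (p - 1) - 1)
            * (‖gradient v x‖ ^ (p - 2) * ‖gradient v x‖ ^ (2:ℕ)) := by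
  have hvd : ∀ y ∈ Ω, DifferentiableAt ℝ v y := fun y hy =>
    (hv.contDiffAt (hΩ.mem_nhds hy)).differentiableAt two_ne_zero
  set φ : EuclideanSpace ℝ (Fin n) → ℝ := fun y => α ^ (p-1) * v y ^ ((α-1)*(p-1)) with hφdef
  set F : Fin n → EuclideanSpace ℝ (Fin n) → ℝ :=
    fun i y => ‖gradient v y‖ ^ (p-2) * gradient v y i with hFdef
  -- pointwise identity on Ω
  have hpt : ∀ i : Fin n, ∀ y ∈ Ω,
      ‖gradient (fun z => v z ^ α) y‖ ^ (p - 2) * gradient (fun z => v z ^ α) y i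
        = φ y * F i y := by
    intro i y hy
    have hg := gradient_rpow hvd hvpos α hy
    have hc : 0 < α * v y ^ (α - 1) := mul_pos hα0 (Real.rpow_pos_of_pos (hvpos y hy) _)
    have h1 : ‖(α * v y ^ (α-1)) • gradient v y‖ = (α * v y ^ (α-1)) * ‖gradient v y‖ := by
      rw [norm_smul, Real.norm_eq_abs, abs_of_pos hc]
    have h2 : ((α * v y ^ (α-1)) • gradient v y) i = (α * v y ^ (α-1)) * gradient v y i := rfl
    have h3 : (α * v y ^ (α-1)) ^ (p-2) * (α * v y ^ (α-1)) = α ^ (p-1) * v y ^ ((α-1)*(p-1)) := by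
      have e1 : (α * v y ^ (α-1)) ^ (p-2) * (α * v y ^ (α-1)) = (α * v y ^ (α-1)) ^ (p-1) := by
        nth_rewrite 2 [← Real.rpow_one (α * v y ^ (α-1))]
        rw [← Real.rpow_add hc]; ring_nf
      rw [e1, Real.mul_rpow hα0.le (Real.rpow_nonneg (hvpos y hy).le _),
        ← Real.rpow_mul (hvpos y hy).le]
    rw [hg, h1, h2, Real.mul_rpow hc.le (norm_nonneg _)]
    calc (α * v y ^ (α-1)) ^ (p-2) * ‖gradient v y‖ ^ (p-2)
          * ((α * v y ^ (α-1)) * gradient v y i)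
        = ((α * v y ^ (α-1)) ^ (p-2) * (α * v y ^ (α-1)))
            * (‖gradient v y‖ ^ (p-2) * gradient v y i) := by ring
      _ = φ y * F i y := by rw [h3]
  -- differentiability at x
  have hvdx := hvd x hx
  have hvx := hvpos x hx
  have hgx := hvgrad x hx
  have hgd : DifferentiableAt ℝ (gradient v) x := by
    have h1 : ContDiffAt ℝ 1 (fderiv ℝ v) x :=
      (hv.contDiffAt (hΩ.mem_nhds hx)).fderiv_right (by norm_num)
    have h2 := h1.differentiableAt one_ne_zero
    exact ((toDual ℝ (EuclideanSpace ℝ (Fin n))).symm.toContinuousLinearEquiv.toContinuousLinearMap.differentiableAt).comp x h2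
  have hnormd : DifferentiableAt ℝ (fun y => ‖gradient v y‖) x := hgd.norm ℝ hgx
  have hnpow : DifferentiableAt ℝ (fun y => ‖gradient v y‖ ^ (p-2)) x :=
    hnormd.rpow_const (Or.inl (norm_ne_zero_iff.2 hgx))
  have hproj : ∀ i : Fin n, DifferentiableAt ℝ (fun y => gradient v y i) x := fun i =>
    ((EuclideanSpace.proj i : EuclideanSpace ℝ (Fin n) →L[ℝ] ℝ).differentiableAt).comp x hgd
  have hFd : ∀ i, DifferentiableAt ℝ (F i) x := fun i => hnpow.mul (hproj i)
  have hφd : DifferentiableAt ℝ φ x := (hvdx.rpow_const (Or.inl hvx.ne')).const_mul _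
  set C : ℝ := α ^ (p-1) * ((α-1)*(p-1) * v x ^ ((α-1)*(p-1) - 1)) with hCdef
  have hφ' : HasFDerivAt φ (C • fderiv ℝ v x) x := by
    have hr : HasDerivAt (fun t : ℝ => t ^ ((α-1)*(p-1)))
        ((α-1)*(p-1) * v x ^ ((α-1)*(p-1) - 1)) (v x) :=
      Real.hasDerivAt_rpow_const (Or.inl hvx.ne')
    have h4 := (hr.comp_hasFDerivAt x hvdx.hasFDerivAt).const_mul (α ^ (p-1))
    rw [smul_smul] at h4
    exact h4
  have hsum : ∀ i : Fin n,
      fderiv ℝ (fun y => ‖gradient (fun z => v z ^ α) y‖ ^ (p - 2)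
          * gradient (fun z => v z ^ α) y i) x (EuclideanSpace.single i 1)
        = φ x * fderiv ℝ (F i) x (EuclideanSpace.single i 1)
          + (C * ‖gradient v x‖ ^ (p-2)) * (gradient v x i * gradient v x i) := by
    intro i
    have heq : (fun y => ‖gradient (fun z => v z ^ α) y‖ ^ (p - 2)
        * gradient (fun z => v z ^ α) y i) =ᶠ[nhds x] fun y => φ y * F i y :=
      Filter.eventuallyEq_of_mem (hΩ.mem_nhds hx) (hpt i)
    rw [heq.fderiv_eq, fderiv_fun_mul hφd (hFd i)]
    have hφf : fderiv ℝ φ x (EuclideanSpace.single i 1) = C * gradient v x i := by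
      rw [hφ'.fderiv, gradient_apply_single]
      simp
    simp only [ContinuousLinearMap.add_apply, ContinuousLinearMap.smul_apply, smul_eq_mul, hφf]
    simp only [hFdef]
    ring
  have hΔ : ∑ i : Fin n, fderiv ℝ (F i) x (EuclideanSpace.single i 1) = pLaplacian p v x := rfl
  have hinner : ∑ i : Fin n, gradient v x i * gradient v x i = ‖gradient v x‖ ^ (2:ℕ) := by
    have h := real_inner_self_eq_norm_sq (gradient v x)
    rw [← h]
    simp only [PiLp.inner_apply, RCLike.inner_apply, conj_trivial]
  calc pLaplacian p (fun z => v z ^ α) x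
      = ∑ i : Fin n, (φ x * fderiv ℝ (F i) x (EuclideanSpace.single i 1)
          + (C * ‖gradient v x‖ ^ (p-2)) * (gradient v x i * gradient v x i)) := by
        rw [pLaplacian]; exact Finset.sum_congr rfl fun i _ => hsum i
    _ = φ x * (∑ i : Fin n, fderiv ℝ (F i) x (EuclideanSpace.single i 1))
          + (C * ‖gradient v x‖ ^ (p-2)) * ∑ i : Fin n, gradient v x i * gradient v x i := by
        rw [Finset.sum_add_distrib, ← Finset.mul_sum, ← Finset.mul_sum]
    _ = _ := by rw [hΔ, hinner, hφdef, hCdef]; ring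

theorem pLaplacian_power_lower_bound (n : ℕ) (p b c₁ α : ℝ)
    (hp : 1 < p) (hb₀ : 0 < b) (hb₁ : b < p - 1) (hc₁ : 0 < c₁)
    (hα : α = 1 - b / (p - 1))
    (Ω : Set (EuclideanSpace ℝ (Fin n))) (hΩ : IsOpen Ω)
    (v : EuclideanSpace ℝ (Fin n) → ℝ) (hv : ContDiffOn ℝ 2 v Ω)
    (hvpos : ∀ x ∈ Ω, 0 < v x) (hvgrad : ∀ x ∈ Ω, gradient v x ≠ 0)
    (hsub : ∀ x ∈ Ω, c₁ * v x ^ b ≤ pLaplacian p v x) :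
    (0 < α ∧ α < 1) ∧
    ∀ x ∈ Ω,
      α ^ (p - 1) * c₁
        + ((α - 1) * (p - 1) / (α * v x ^ α)) * ‖gradient (fun y => v y ^ α) x‖ ^ p
      ≤ pLaplacian p (fun y => v y ^ α) x := by
  have hp1 : (0:ℝ) < p - 1 := by linarith
  have hα0 : 0 < α := by
    rw [hα]
    have : b / (p - 1) < 1 := (div_lt_one hp1).2 hb₁
    linarith
  have hα1 : α < 1 := by
    rw [hα]
    have : 0 < b / (p - 1) := div_pos hb₀ hp1
    linarith
  refine ⟨⟨hα0, hα1⟩, fun x hx => ?_⟩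
  have hvd : ∀ y ∈ Ω, DifferentiableAt ℝ v y := fun y hy =>
    (hv.contDiffAt (hΩ.mem_nhds hy)).differentiableAt two_ne_zero
  have hvx := hvpos x hx
  have hgx := hvgrad x hx
  have hg0 : (0:ℝ) < ‖gradient v x‖ := norm_pos_iff.2 hgx
  have hq : (α - 1) * (p - 1) = -b := by rw [hα]; field_simp; ring
  have hkey := pLaplacian_rpow p α hα0 hΩ hv hvpos hvgrad hx
  have hgrad : gradient (fun y => v y ^ α) x = (α * v x ^ (α - 1)) • gradient v x :=
    gradient_rpow hvd hvpos α hx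
  have hc : 0 < α * v x ^ (α - 1) := mul_pos hα0 (Real.rpow_pos_of_pos hvx _)
  have hnorm : ‖gradient (fun y => v y ^ α) x‖ = (α * v x ^ (α - 1)) * ‖gradient v x‖ := by
    rw [hgrad, norm_smul, Real.norm_eq_abs, abs_of_pos hc]
  rw [hkey, hnorm]
  -- second terms agree
  have hterm2 : ((α - 1) * (p - 1) / (α * v x ^ α)) * ((α * v x ^ (α - 1)) * ‖gradient v x‖) ^ p
      = α ^ (p - 1) * ((α - 1) * (p - 1)) * v x ^ ((α - 1) * (p - 1) - 1)
          * (‖gradient v x‖ ^ (p - 2) * ‖gradient v x‖ ^ (2:ℕ)) := by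
    have hN : ‖gradient v x‖ ^ (p - 2) * ‖gradient v x‖ ^ (2:ℕ) = ‖gradient v x‖ ^ p := by
      rw [← Real.rpow_natCast ‖gradient v x‖ 2, ← Real.rpow_add hg0]
      norm_num
    have hmul : ((α * v x ^ (α - 1)) * ‖gradient v x‖) ^ p
        = α ^ p * v x ^ ((α - 1) * p) * ‖gradient v x‖ ^ p := by
      rw [Real.mul_rpow hc.le (norm_nonneg _),
        Real.mul_rpow hα0.le (Real.rpow_nonneg hvx.le _), ← Real.rpow_mul hvx.le]
    have hαp : α ^ p = α * α ^ (p - 1) := by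
      nth_rewrite 1 [show p = 1 + (p - 1) by ring]
      rw [Real.rpow_add hα0, Real.rpow_one]
    have hvp : v x ^ ((α - 1) * p) = v x ^ α * v x ^ ((α - 1) * (p - 1) - 1) := by
      rw [← Real.rpow_add hvx]; ring_nf
    have hvα : v x ^ α ≠ 0 := (Real.rpow_pos_of_pos hvx α).ne'
    rw [hN, hmul, hαp, hvp]
    field_simp
  rw [hterm2]
  have h1 : α ^ (p - 1) * c₁ ≤ α ^ (p - 1) * v x ^ ((α - 1) * (p - 1)) * pLaplacian p v x := by
    have hb' : c₁ * v x ^ b ≤ pLaplacian p v x := hsub x hx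
    have hvb : (0:ℝ) < v x ^ b := Real.rpow_pos_of_pos hvx b
    have hc1 : c₁ = v x ^ (-b) * (c₁ * v x ^ b) := by
      rw [Real.rpow_neg hvx.le]
      field_simp
    have h2 : v x ^ (-b) * (c₁ * v x ^ b) ≤ v x ^ (-b) * pLaplacian p v x :=
      mul_le_mul_of_nonneg_left hb' (Real.rpow_pos_of_pos hvx _).le
    have h3 : c₁ ≤ v x ^ ((α - 1) * (p - 1)) * pLaplacian p v x := by
      rw [hq]; linarith [hc1 ▸ h2]
    calc α ^ (p - 1) * c₁ ≤ α ^ (p - 1) * (v x ^ ((α - 1) * (p - 1)) * pLaplacian p v x) :=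
          mul_le_mul_of_nonneg_left h3 (Real.rpow_pos_of_pos hα0 _).le
      _ = _ := by ring
  linarith
end
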